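/- arXiv:1506.02172 — 3 statements merged into one kernel-verified Lean document; each statement's English description precedes it below -/
import Mathlib

section
/- Let D be a principal ideal domain, p ∈ D a prime element, A an n×n matrix over D, ℓ ≥ 1, and ν_ℓ a (p^ℓ)-minimal polynomial of A. If f ∈ N_{(p^ℓ)}(A), then there exist uniquely determined polynomials q, g ∈ D[X] with deg(g) < deg(ν_ℓ) such that f = q·ν_ℓ + p·g. Consequently, N_{(p^ℓ)}(A) = ν_ℓ·D[X] + p·N_{(p^{ℓ-1})}(A). -/
/-- `f(A) ∈ d·M_n(D)`, i.e. `f` belongs to the `(d)`-ideal `N_{(d)}(A)` of the matrix `A`. -/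
def memNullDvd {D : Type*} [CommRing D] {n : ℕ} (A : Matrix (Fin n) (Fin n) D) (d : D)
    (f : Polynomial D) : Prop :=
  ∃ B : Matrix (Fin n) (Fin n) D, Polynomial.aeval A f = d • B

/-- `f` is a `(d)`-minimal polynomial of `A`: a monic polynomial in `N_{(d)}(A)` of minimal
degree among monic polynomials in `N_{(d)}(A)`. -/
def IsMinPolyMod {D : Type*} [CommRing D] {n : ℕ} (A : Matrix (Fin n) (Fin n) D) (d : D)
    (f : Polynomial D) : Prop :=
  f.Monic ∧ memNullDvd A d f ∧
    ∀ g : Polynomial D, g.Monic → memNullDvd A d g → f.degree ≤ g.degree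

/-! Dividing `f ∈ N_{(p^ℓ)}(A)` by the monic `ν_ℓ` leaves a remainder in `N_{(p^ℓ)}(A)` of
degree `< deg ν_ℓ`, so everything rests on: such a polynomial is divisible by `p`. This goes by
induction on `ℓ`. Divide `f` by a `(p^{ℓ-1})`-minimal `ν_{ℓ-1}` (one exists by Cayley–Hamilton):
`f = q ν_{ℓ-1} + r` with `p ∣ r` by induction. If `p ∤ q`, then over the field `D/(p)` some
multiple `c q` is congruent to a monic `w` with `deg w ≤ deg q`, and
`w ν_{ℓ-1} + c r ≡ c f` modulo `p N_{(p^{ℓ-1})}(A) ⊆ N_{(p^ℓ)}(A)` is a monic element of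
`N_{(p^ℓ)}(A)` of degree `≤ deg (f - r) < deg ν_ℓ`, contradicting minimality. Uniqueness is
uniqueness of division with remainder by `ν_ℓ`. -/

open Polynomial

section NullIdeal

variable {D : Type*} [CommRing D] {n : ℕ} {A : Matrix (Fin n) (Fin n) D} {d : D} {f g : D[X]}

variable (A) in
theorem memNullDvd_one (f : D[X]) : memNullDvd A 1 f :=
  ⟨aeval A f, (one_smul D _).symm⟩

theorem memNullDvd.add (hf : memNullDvd A d f) (hg : memNullDvd A d g) :
    memNullDvd A d (f + g) := by
  obtain ⟨B, hB⟩ := hf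
  obtain ⟨B', hB'⟩ := hg
  exact ⟨B + B', by rw [map_add, hB, hB', smul_add]⟩

theorem memNullDvd.sub (hf : memNullDvd A d f) (hg : memNullDvd A d g) :
    memNullDvd A d (f - g) := by
  obtain ⟨B, hB⟩ := hf
  obtain ⟨B', hB'⟩ := hg
  exact ⟨B - B', by rw [map_sub, hB, hB', smul_sub]⟩

theorem memNullDvd.mul_left (hf : memNullDvd A d f) (g : D[X]) : memNullDvd A d (g * f) := by
  obtain ⟨B, hB⟩ := hf
  exact ⟨aeval A g * B, by rw [map_mul, hB, Matrix.mul_smul]⟩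

theorem memNullDvd.of_dvd {e : D} (hf : memNullDvd A d f) (hed : e ∣ d) : memNullDvd A e f := by
  obtain ⟨B, hB⟩ := hf
  obtain ⟨k, rfl⟩ := hed
  exact ⟨k • B, by rw [hB, mul_smul]⟩

theorem memNullDvd.modByMonic (hf : memNullDvd A d f) (hg : memNullDvd A d g) :
    memNullDvd A d (f %ₘ g) := by
  rw [modByMonic_eq_sub_mul_div, mul_comm]
  exact hf.sub (hg.mul_left _)

theorem memNullDvd_C_mul_iff [NoZeroDivisors D] {c : D} (hc : c ≠ 0) :
    memNullDvd A (c * d) (C c * f) ↔ memNullDvd A d f := by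
  simp only [memNullDvd, map_mul, aeval_C, ← Algebra.smul_def, mul_smul]
  exact exists_congr fun B => smul_right_injective _ hc |>.eq_iff

theorem memNullDvd_C_mul_iff_pow_pred [NoZeroDivisors D] {p : D} (hp : p ≠ 0) (ℓ : ℕ) :
    memNullDvd A (p ^ ℓ) (C p * f) ↔ memNullDvd A (p ^ (ℓ - 1)) f := by
  cases ℓ with
  | zero => simp only [pow_zero, zero_tsub, memNullDvd_one]
  | succ ℓ => rw [pow_succ', memNullDvd_C_mul_iff hp, Nat.add_sub_cancel]

variable (A d) in
theorem exists_isMinPolyMod [Nontrivial D] :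
    ∃ ν, IsMinPolyMod A d ν := by
  classical
  have hex : ∃ k, ∃ g : D[X], g.Monic ∧ memNullDvd A d g ∧ g.natDegree = k :=
    ⟨_, A.charpoly, A.charpoly_monic, ⟨0, by rw [Matrix.aeval_self_charpoly, smul_zero]⟩, rfl⟩
  obtain ⟨ν, hν, hνA, hdeg⟩ := Nat.find_spec hex
  refine ⟨ν, hν, hνA, fun g hg hgA => ?_⟩
  rw [degree_eq_natDegree hν.ne_zero, degree_eq_natDegree hg.ne_zero, hdeg]
  exact_mod_cast Nat.find_min' hex ⟨g, hg, hgA, rfl⟩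

end NullIdeal

theorem exists_monic_C_dvd_sub_C_mul {D : Type*} [CommRing D] [IsDomain D]
    [IsPrincipalIdealRing D] {p : D} (hp : Prime p) {q : D[X]} (hq : ¬ C p ∣ q) :
    ∃ (c : D) (w : D[X]), w.Monic ∧ w.degree ≤ q.degree ∧ C p ∣ w - C c * q := by
  let I := Ideal.span {p}
  have : I.IsMaximal := PrincipalIdealRing.isMaximal_of_irreducible hp.irreducible
  let _ : Field (D ⧸ I) := Ideal.Quotient.field I
  have hC_dvd (g : D[X]) : C p ∣ g ↔ g.map (Ideal.Quotient.mk I) = 0 := by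
    simp only [C_dvd_iff_dvd_coeff, Polynomial.ext_iff, coeff_map, coeff_zero,
      Ideal.Quotient.eq_zero_iff_mem, I, Ideal.mem_span_singleton]
  have hq0 : q.map (Ideal.Quotient.mk I) ≠ 0 := (hC_dvd q).not.mp hq
  obtain ⟨c, hc⟩ := Ideal.Quotient.mk_surjective (q.map (Ideal.Quotient.mk I)).leadingCoeff⁻¹
  obtain ⟨w, hw_map, hw_deg, hw⟩ := lifts_and_degree_eq_and_monic
    (mem_lifts_of_surjective Ideal.Quotient.mk_surjective _) (monic_mul_leadingCoeff_inv hq0)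
  refine ⟨c, w, hw, ?_, (hC_dvd _).mpr ?_⟩
  · rw [hw_deg, degree_mul_leadingCoeff_inv _ hq0]
    exact degree_map_le
  · rw [Polynomial.map_sub, Polynomial.map_mul, map_C, hc, hw_map, mul_comm, sub_self]

theorem existsUnique_eq_mul_add_C_mul {D : Type*} [CommRing D] [IsDomain D] {p : D} (hp : p ≠ 0)
    {ν f : D[X]} (hν : ν.Monic) (hdvd : C p ∣ f %ₘ ν) :
    ∃! qg : D[X] × D[X], qg.2.degree < ν.degree ∧ f = qg.1 * ν + C p * qg.2 := by
  obtain ⟨g, hg⟩ := hdvd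
  refine ⟨(f /ₘ ν, g), ⟨?_, ?_⟩, ?_⟩
  · rw [← degree_C_mul hp, ← hg]
    exact degree_modByMonic_lt f hν
  · rw [← hg, mul_comm, add_comm, modByMonic_add_div f ν]
  · rintro ⟨q, g'⟩ ⟨hdeg, hfqg⟩
    dsimp only at hdeg hfqg
    obtain ⟨hq, hr⟩ := div_modByMonic_unique (f := f) q (C p * g') hν
      ⟨by rw [hfqg]; ring, by rwa [degree_C_mul hp]⟩
    exact Prod.ext hq.symm (mul_left_cancel₀ (C_ne_zero.mpr hp) (hr.symm.trans hg))

section MinPolyMod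

variable {D : Type*} [CommRing D] [IsDomain D] [IsPrincipalIdealRing D] {p : D} {n : ℕ}
  {A : Matrix (Fin n) (Fin n) D}

theorem C_dvd_divByMonic_of_degree_lt (hp : Prime p) {ℓ : ℕ} {ν' ν f : D[X]}
    (hν' : IsMinPolyMod A (p ^ ℓ) ν') (hν : IsMinPolyMod A (p ^ (ℓ + 1)) ν)
    (hf : memNullDvd A (p ^ (ℓ + 1)) f) (hdeg : f.degree < ν.degree) : C p ∣ f /ₘ ν' := by
  set q := f /ₘ ν'
  set r := f %ₘ ν'
  have hfqr : r + ν' * q = f := modByMonic_add_div f ν'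
  have hr : r.degree < ν'.degree := degree_modByMonic_lt f hν'.1
  have hν'ν : ν'.degree ≤ ν.degree := hν'.2.2 ν hν.1 (hν.2.1.of_dvd (pow_dvd_pow p ℓ.le_succ))
  by_contra hq
  obtain ⟨c, w, hw, hwq, y, hy⟩ := exists_monic_C_dvd_sub_C_mul hp hq
  have hlow : (C c * r).degree < (w * ν').degree :=
    calc (C c * r).degree ≤ r.degree := by rw [C_mul']; exact degree_smul_le c r
      _ < ν'.degree := hr
      _ ≤ (w * ν').degree := by rw [mul_comm]; exact degree_le_mul_left ν' hw.ne_zero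
  have hmem : memNullDvd A (p ^ (ℓ + 1)) (w * ν' + C c * r) := by
    have hm : w * ν' + C c * r = C c * f + C p * (y * ν') := by
      rw [← hfqr]
      linear_combination ν' * hy
    rw [hm]
    refine (hf.mul_left _).add ?_
    rw [pow_succ', memNullDvd_C_mul_iff hp.ne_zero]
    exact hν'.2.1.mul_left y
  have hlt : (w * ν' + C c * r).degree < ν.degree :=
    calc (w * ν' + C c * r).degree = (w * ν').degree := degree_add_eq_left_of_degree_lt hlow
      _ ≤ (q * ν').degree := by rw [degree_mul, degree_mul]; exact add_le_add_left hwq _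
      _ = (f - r).degree := by rw [← hfqr, add_sub_cancel_left, mul_comm]
      _ ≤ max f.degree r.degree := degree_sub_le f r
      _ < ν.degree := max_lt hdeg (hr.trans_le hν'ν)
  exact (hν.2.2 _ ((hw.mul hν'.1).add_of_left hlow) hmem).not_gt hlt

theorem C_dvd_of_degree_lt (hp : Prime p) :
    ∀ {ℓ : ℕ} {ν f : D[X]}, IsMinPolyMod A (p ^ ℓ) ν → memNullDvd A (p ^ ℓ) f →
      f.degree < ν.degree → C p ∣ f
  | 0, ν, f, hν, _, hdeg => by
    rw [pow_zero] at hν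
    have hν1 : ν.degree ≤ 0 := degree_one (R := D) ▸ hν.2.2 1 monic_one (memNullDvd_one A 1)
    rw [degree_eq_bot.mp (Nat.WithBot.lt_zero_iff.mp (hdeg.trans_le hν1))]
    exact dvd_zero _
  | ℓ + 1, ν, f, hν, hf, hdeg => by
    obtain ⟨ν', hν'⟩ := exists_isMinPolyMod A (p ^ ℓ)
    have hf' : memNullDvd A (p ^ ℓ) f := hf.of_dvd (pow_dvd_pow p ℓ.le_succ)
    rw [← modByMonic_add_div f ν']
    exact dvd_add
      (C_dvd_of_degree_lt hp hν' (hf'.modByMonic hν'.2.1) (degree_modByMonic_lt f hν'.1))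
      ((C_dvd_divByMonic_of_degree_lt hp hν' hν hf hdeg).mul_left ν')

end MinPolyMod

theorem stmt3_general {D : Type*} [CommRing D] [IsDomain D] [IsPrincipalIdealRing D]
    (p : D) (hp : Prime p) (ℓ : ℕ)
    {n : ℕ} (A : Matrix (Fin n) (Fin n) D)
    (ν : Polynomial D) (hν : IsMinPolyMod A (p ^ ℓ) ν) :
    (∀ f : Polynomial D, memNullDvd A (p ^ ℓ) f →
      ∃! qg : Polynomial D × Polynomial D,
        qg.2.degree < ν.degree ∧ f = qg.1 * ν + Polynomial.C p * qg.2) ∧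
    (∀ f : Polynomial D, memNullDvd A (p ^ ℓ) f ↔
      ∃ q h : Polynomial D, memNullDvd A (p ^ (ℓ - 1)) h ∧
        f = q * ν + Polynomial.C p * h) := by
  have hdecomp (f : D[X]) (hf : memNullDvd A (p ^ ℓ) f) :=
    existsUnique_eq_mul_add_C_mul hp.ne_zero hν.1 <|
      C_dvd_of_degree_lt hp hν (hf.modByMonic hν.2.1) (degree_modByMonic_lt f hν.1)
  refine ⟨hdecomp, fun f => ⟨fun hf => ?_, ?_⟩⟩
  · obtain ⟨⟨q, g⟩, ⟨-, hfqg⟩, -⟩ := hdecomp f hf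
    refine ⟨q, g, ?_, hfqg⟩
    rw [← memNullDvd_C_mul_iff_pow_pred hp.ne_zero, eq_sub_of_add_eq' hfqg.symm]
    exact hf.sub (hν.2.1.mul_left q)
  · rintro ⟨q, h, hh, rfl⟩
    exact (hν.2.1.mul_left q).add ((memNullDvd_C_mul_iff_pow_pred hp.ne_zero ℓ).mpr hh)

/-- Let `p` be prime, `ℓ ≥ 1` and `ν_ℓ` a `(p^ℓ)`-minimal polynomial of `A`.
Every `f ∈ N_{(p^ℓ)}(A)` can be written uniquely as `f = q·ν_ℓ + p·g` with `deg g < deg ν_ℓ`;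
consequently `N_{(p^ℓ)}(A) = ν_ℓ·D[X] + p·N_{(p^{ℓ-1})}(A)`. -/
theorem stmt3 {D : Type*} [CommRing D] [IsDomain D] [IsPrincipalIdealRing D]
    (p : D) (hp : Prime p) (ℓ : ℕ) (hℓ : 1 ≤ ℓ)
    {n : ℕ} (A : Matrix (Fin n) (Fin n) D)
    (ν : Polynomial D) (hν : IsMinPolyMod A (p ^ ℓ) ν) :
    (∀ f : Polynomial D, memNullDvd A (p ^ ℓ) f →
      ∃! qg : Polynomial D × Polynomial D,
        qg.2.degree < ν.degree ∧ f = qg.1 * ν + Polynomial.C p * qg.2) ∧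
    (∀ f : Polynomial D, memNullDvd A (p ^ ℓ) f ↔
      ∃ q h : Polynomial D, memNullDvd A (p ^ (ℓ - 1)) h ∧
        f = q * ν + Polynomial.C p * h) :=
  stmt3_general p hp ℓ A ν hν
end

section
/- Let D be a principal ideal domain, p ∈ D a prime element, A an n×n matrix over D, ℓ ≥ 1, and let ν_j be (p^j)-minimal polynomials of A for 1 ≤ j ≤ ℓ. If f ∈ N_{(p^ℓ)}(A) and deg(f) < deg(ν_j), then f ∈ p^{ℓ-(j-1)}·D[X]. In particular, if deg(ν_ℓ) = deg(ν_j), then N_{(p^ℓ)}(A) = ν_ℓ·D[X] + p^{ℓ-(j-1)}·N_{(p^{j-1})}(A). -/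
open Polynomial

/-!
If `f ∈ N_{(p^i)}(A)` has degree below `deg ν_i`, then `p` divides the leading coefficient `a`
of `f`: otherwise `u p^i + v a = 1` for some `u, v`, and `u p^i X^{deg f} + v f` is a monic
element of `N_{(p^i)}(A)` of degree `deg f`. Subtracting `a X^k ν_{i-1}`, which lies in
`N_{(p^i)}(A)` because `p ∣ a`, lowers the degree, so induction on the degree and on `i` gives
`p ∣ f`. Then `f / p ∈ N_{(p^{i-1})}(A)`, and as `deg ν_i` increases with `i` this division can
be repeated `ℓ - (j - 1)` times. The description of `N_{(p^ℓ)}(A)` follows by applying this to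
the remainder of `f` modulo the monic `ν_ℓ`.
-/

namespace memNullDvd

variable {D : Type*} [CommRing D] {n : ℕ} {A : Matrix (Fin n) (Fin n) D} {d : D}
  {f g : D[X]}

lemma sub_s4 (hf : memNullDvd A d f) (hg : memNullDvd A d g) : memNullDvd A d (f - g) := by
  obtain ⟨B, hB⟩ := hf
  obtain ⟨B', hB'⟩ := hg
  exact ⟨B - B', by rw [map_sub, hB, hB', smul_sub]⟩

lemma add_s4 (hf : memNullDvd A d f) (hg : memNullDvd A d g) : memNullDvd A d (f + g) := by
  obtain ⟨B, hB⟩ := hf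
  obtain ⟨B', hB'⟩ := hg
  exact ⟨B + B', by rw [map_add, hB, hB', smul_add]⟩

lemma mul_right (hf : memNullDvd A d f) (g : D[X]) : memNullDvd A d (f * g) := by
  obtain ⟨B, hB⟩ := hf
  exact ⟨B * aeval A g, by rw [map_mul, hB, Matrix.smul_mul]⟩

lemma mul_left_s4 (hf : memNullDvd A d f) (g : D[X]) : memNullDvd A d (g * f) :=
  mul_comm f g ▸ hf.mul_right g

lemma mono {e : D} (hde : d ∣ e) (hf : memNullDvd A e f) : memNullDvd A d f := by
  obtain ⟨c, rfl⟩ := hde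
  obtain ⟨B, hB⟩ := hf
  exact ⟨c • B, by rw [hB, smul_smul]⟩

lemma C_mul (c : D) (hf : memNullDvd A d f) : memNullDvd A (c * d) (C c * f) := by
  obtain ⟨B, hB⟩ := hf
  exact ⟨B, by rw [map_mul, aeval_C, hB, ← Algebra.smul_def, smul_smul]⟩

lemma of_one (f : D[X]) : memNullDvd A 1 f := ⟨aeval A f, (one_smul D _).symm⟩

lemma of_C_mul [IsDomain D] {c : D} (hc : c ≠ 0) (hf : memNullDvd A (c * d) (C c * f)) :
    memNullDvd A d f := by
  obtain ⟨B, hB⟩ := hf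
  refine ⟨B, smul_right_injective _ hc ?_⟩
  simpa only [map_mul, aeval_C, ← Algebra.smul_def, smul_smul] using hB

end memNullDvd

section MinPoly

variable {D : Type*} [CommRing D] {n : ℕ} {A : Matrix (Fin n) (Fin n) D} {d : D}

lemma exists_monic_memNullDvd_of_isCoprime_leadingCoeff [Nontrivial D] {f : D[X]}
    (hf : memNullDvd A d f) (hcop : IsCoprime d f.leadingCoeff) :
    ∃ g : D[X], g.Monic ∧ memNullDvd A d g ∧ g.natDegree = f.natDegree := by
  obtain ⟨u, v, huv⟩ := hcop
  set g := C (u * d) * X ^ f.natDegree + C v * f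
  have hgN : memNullDvd A d g := by
    refine memNullDvd.add_s4 ⟨u • A ^ f.natDegree, ?_⟩ (hf.mul_left_s4 (C v))
    rw [map_mul, aeval_C, map_pow, aeval_X, ← Algebra.smul_def, smul_smul, mul_comm]
  have hgcoeff : g.coeff f.natDegree = 1 := by
    rw [coeff_add, coeff_C_mul, coeff_C_mul, coeff_X_pow_self, mul_one, coeff_natDegree, huv]
  have hgdeg : g.natDegree ≤ f.natDegree :=
    natDegree_add_le_of_degree_le
      ((natDegree_C_mul_le _ _).trans (natDegree_X_pow_le _)) (natDegree_C_mul_le _ _)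
  have hgmonic : g.Monic := monic_of_natDegree_le_of_coeff_eq_one _ hgdeg hgcoeff
  refine ⟨g, hgmonic, hgN, le_antisymm hgdeg (le_natDegree_of_ne_zero ?_)⟩
  rw [hgcoeff]
  exact one_ne_zero

lemma IsMinPolyMod.degree_le_of_dvd {e : D} {μ ν : D[X]} (hμ : IsMinPolyMod A d μ)
    (hν : IsMinPolyMod A e ν) (hde : d ∣ e) : μ.degree ≤ ν.degree :=
  hμ.2.2 ν hν.1 (hν.2.1.mono hde)

lemma IsMinPolyMod.not_isCoprime_leadingCoeff [Nontrivial D] {ν f : D[X]}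
    (hν : IsMinPolyMod A d ν) (hf : memNullDvd A d f) (hf0 : f ≠ 0)
    (hdeg : f.degree < ν.degree) : ¬IsCoprime d f.leadingCoeff := by
  intro hcop
  obtain ⟨g, hg, hgN, hgdeg⟩ := exists_monic_memNullDvd_of_isCoprime_leadingCoeff hf hcop
  have hνg := hν.2.2 g hg hgN
  rw [degree_eq_natDegree hg.ne_zero, hgdeg, ← degree_eq_natDegree hf0] at hνg
  exact hdeg.not_ge hνg

end MinPoly

section Prime

variable {D : Type*} [CommRing D] [IsDomain D] [IsPrincipalIdealRing D] {n : ℕ}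
  {A : Matrix (Fin n) (Fin n) D} {p : D}

lemma C_dvd_of_memNullDvd_pow_succ (hp : Prime p) {i : ℕ} {ν w : D[X]}
    (hν : IsMinPolyMod A (p ^ (i + 1)) ν) (hw : w.Monic) (hwN : memNullDvd A (p ^ i) w)
    (hsmall : ∀ f : D[X], memNullDvd A (p ^ i) f → f.degree < w.degree → C p ∣ f)
    (f : D[X]) (hf : memNullDvd A (p ^ (i + 1)) f) (hdeg : f.degree < ν.degree) : C p ∣ f := by
  induction f using degree_lt_wf.induction with
  | _ f ih =>
  rcases eq_or_ne f 0 with rfl | hf0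
  · exact dvd_zero _
  by_cases hfw : f.degree < w.degree
  · exact hsmall f (hf.mono (pow_dvd_pow p i.le_succ)) hfw
  obtain ⟨b, hb⟩ : p ∣ f.leadingCoeff := by
    by_contra hpa
    exact hν.not_isCoprime_leadingCoeff hf hf0 hdeg (hp.coprime_iff_not_dvd.2 hpa).pow_left
  set s := w * (C f.leadingCoeff * X ^ (f.natDegree - w.natDegree)) with hs_def
  have hs : s = C p * (w * (C b * X ^ (f.natDegree - w.natDegree))) := by
    rw [hs_def, hb, C_mul]; ring
  have hsN : memNullDvd A (p ^ (i + 1)) s := by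
    rw [hs, pow_succ']
    exact (hwN.mul_right _).C_mul p
  have hlt : (f - s).degree < f.degree := div_wf_lemma ⟨not_lt.1 hfw, hf0⟩ hw
  have hdvd := ih (f - s) hlt (hf.sub_s4 hsN) (hlt.trans hdeg)
  simpa using dvd_add hdvd (hs ▸ dvd_mul_right _ _ : C p ∣ s)

lemma C_dvd_of_memNullDvd_of_degree_lt (hp : Prime p) {ℓ : ℕ} {ν : ℕ → D[X]}
    (hν : ∀ i, 1 ≤ i → i ≤ ℓ → IsMinPolyMod A (p ^ i) (ν i)) {i : ℕ} (hi1 : 1 ≤ i)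
    (hiℓ : i ≤ ℓ) {f : D[X]} (hf : memNullDvd A (p ^ i) f) (hdeg : f.degree < (ν i).degree) :
    C p ∣ f := by
  induction i, hi1 using Nat.le_induction generalizing f with
  | base =>
    refine C_dvd_of_memNullDvd_pow_succ hp (i := 0) (by simpa using hν 1 le_rfl hiℓ) monic_one
      (by simpa using memNullDvd.of_one 1) (fun g _ hg => ?_) f (by simpa using hf) hdeg
    rw [degree_one, Nat.WithBot.lt_zero_iff, degree_eq_bot] at hg
    simp [hg]
  | succ i hi ih =>
    exact C_dvd_of_memNullDvd_pow_succ hp (hν (i + 1) (by omega) hiℓ)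
      (hν i hi (by omega)).1 (hν i hi (by omega)).2.1 (fun g hg hgdeg => ih (by omega) hg hgdeg)
      f hf hdeg

end Prime

section Domain

variable {D : Type*} [CommRing D] [IsDomain D] {n : ℕ} {A : Matrix (Fin n) (Fin n) D} {p : D}

lemma exists_memNullDvd_eq_C_pow_mul (hp0 : p ≠ 0) {e : ℕ} {δ : WithBot ℕ} (k : ℕ)
    (hdvd : ∀ i, e < i → i ≤ e + k → ∀ g : D[X], memNullDvd A (p ^ i) g → g.degree < δ → C p ∣ g)
    {f : D[X]} (hf : memNullDvd A (p ^ (e + k)) f) (hdeg : f.degree < δ) :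
    ∃ h : D[X], memNullDvd A (p ^ e) h ∧ f = C (p ^ k) * h := by
  induction k generalizing f with
  | zero => exact ⟨f, hf, by simp⟩
  | succ k ih =>
    obtain ⟨g, rfl⟩ := hdvd (e + k + 1) (by omega) le_rfl f hf hdeg
    have hg : memNullDvd A (p ^ (e + k)) g := .of_C_mul hp0 (by rwa [← pow_succ'])
    rw [degree_C_mul hp0] at hdeg
    obtain ⟨h, hh, rfl⟩ := ih (fun i hi hik => hdvd i hi (by omega)) hg hdeg
    exact ⟨h, hh, by rw [pow_succ', C_mul, mul_assoc]⟩

end Domain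

lemma exists_memNullDvd_eq_C_pow_mul_of_degree_lt {D : Type*} [CommRing D] [IsDomain D]
    [IsPrincipalIdealRing D] {n : ℕ} {A : Matrix (Fin n) (Fin n) D} {p : D} (hp : Prime p)
    {ℓ : ℕ} {ν : ℕ → D[X]} (hν : ∀ i, 1 ≤ i → i ≤ ℓ → IsMinPolyMod A (p ^ i) (ν i)) {j : ℕ}
    (hj1 : 1 ≤ j) (hjℓ : j ≤ ℓ) {f : D[X]} (hf : memNullDvd A (p ^ ℓ) f)
    (hdeg : f.degree < (ν j).degree) :
    ∃ h : D[X], memNullDvd A (p ^ (j - 1)) h ∧ f = C (p ^ (ℓ - (j - 1))) * h := by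
  have hℓ : ℓ = j - 1 + (ℓ - (j - 1)) := by omega
  refine exists_memNullDvd_eq_C_pow_mul hp.ne_zero _ (fun i hi hiℓ g hg hgdeg => ?_)
    (hℓ ▸ hf) hdeg
  have hji := (hν j hj1 hjℓ).degree_le_of_dvd (hν i (by omega) (by omega))
    (pow_dvd_pow p (by omega))
  exact C_dvd_of_memNullDvd_of_degree_lt hp hν (by omega) (by omega) hg (hgdeg.trans_le hji)

/-- Let `p` be prime, `1 ≤ j ≤ ℓ` and `ν_i` `(p^i)`-minimal polynomials of `A`
for `1 ≤ i ≤ ℓ`. If `f ∈ N_{(p^ℓ)}(A)` and `deg f < deg ν_j`, then `f ∈ p^{ℓ-(j-1)}·D[X]`.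
In particular, if `deg ν_ℓ = deg ν_j`, then
`N_{(p^ℓ)}(A) = ν_ℓ·D[X] + p^{ℓ-(j-1)}·N_{(p^{j-1})}(A)`. -/
theorem stmt4 {D : Type*} [CommRing D] [IsDomain D] [IsPrincipalIdealRing D]
    (p : D) (hp : Prime p) (ℓ : ℕ) (hℓ : 1 ≤ ℓ)
    {n : ℕ} (A : Matrix (Fin n) (Fin n) D)
    (ν : ℕ → Polynomial D) (hν : ∀ i, 1 ≤ i → i ≤ ℓ → IsMinPolyMod A (p ^ i) (ν i))
    (j : ℕ) (hj1 : 1 ≤ j) (hjℓ : j ≤ ℓ) :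
    (∀ f : Polynomial D, memNullDvd A (p ^ ℓ) f → f.degree < (ν j).degree →
      ∃ h : Polynomial D, f = Polynomial.C (p ^ (ℓ - (j - 1))) * h) ∧
    ((ν ℓ).degree = (ν j).degree →
      ∀ f : Polynomial D, memNullDvd A (p ^ ℓ) f ↔
        ∃ q h : Polynomial D, memNullDvd A (p ^ (j - 1)) h ∧
          f = q * ν ℓ + Polynomial.C (p ^ (ℓ - (j - 1))) * h) := by
  have hνℓ := hν ℓ hℓ le_rfl
  refine ⟨fun f hf hdeg => ?_, fun hdegeq f => ⟨fun hf => ?_, ?_⟩⟩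
  · obtain ⟨h, -, hfh⟩ := exists_memNullDvd_eq_C_pow_mul_of_degree_lt hp hν hj1 hjℓ hf hdeg
    exact ⟨h, hfh⟩
  · have hrN : memNullDvd A (p ^ ℓ) (f %ₘ ν ℓ) := by
      rw [modByMonic_eq_sub_mul_div f (ν ℓ)]
      exact hf.sub_s4 (hνℓ.2.1.mul_right _)
    have hrdeg : (f %ₘ ν ℓ).degree < (ν j).degree := hdegeq ▸ degree_modByMonic_lt f hνℓ.1
    obtain ⟨h, hh, hrh⟩ := exists_memNullDvd_eq_C_pow_mul_of_degree_lt hp hν hj1 hjℓ hrN hrdeg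
    refine ⟨f /ₘ ν ℓ, h, hh, ?_⟩
    rw [← hrh, mul_comm, add_comm, modByMonic_add_div f (ν ℓ)]
  · rintro ⟨q, h, hh, rfl⟩
    have hpow : p ^ ℓ = p ^ (ℓ - (j - 1)) * p ^ (j - 1) := by rw [← pow_add]; congr 1; omega
    exact (hνℓ.2.1.mul_left_s4 q).add_s4 (hpow ▸ hh.C_mul _)
end

section
/- Let D be a principal ideal domain, p ∈ D a prime element, ℓ ≥ 0, A an n×n matrix over D, and let ν_i ∈ D[X] be (p^i)-minimal polynomials of A for 0 ≤ i ≤ ℓ (with ν_0 = 1). Then N_{(p^ℓ)}(A) = Σ_{i ∈ I_A^ℓ} p^{ℓ-i}·ν_i·D[X], where I_A^ℓ is the ℓ-th index set of A with respect to p. -/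
/-- The `ℓ`-th index set of `A` with respect to `p`, computed from a choice `ν` of
`(p^i)`-minimal polynomials: `I_A^ℓ = {ℓ} ∪ {i : 0 ≤ i < ℓ, deg ν_i < deg ν_{i+1}}`. -/
def indexSet {D : Type*} [CommRing D] (ν : ℕ → Polynomial D) (ℓ : ℕ) : Finset ℕ :=
  insert ℓ ((Finset.range ℓ).filter fun i => (ν i).natDegree < (ν (i + 1)).natDegree)

/-! The ideal `N_{(p^ℓ)}(A)` contains each `p^{ℓ-i} ν_i`. Conversely, a nonzero
`f ∈ N_{(p^ℓ)}(A)` is reduced by its leading term: for the largest `i ≤ ℓ` with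
`deg ν_i ≤ deg f`, the power `p^{ℓ-i}` divides `f`, so the leading term of `f` is that of a
multiple of `p^{ℓ-i} ν_i`.

The divisibility rests on minimality. Let `g ∈ N_{(p^j)}(A)` with `deg g < deg ν_j`. If `p` did
not divide the leading coefficient of `g`, a Bézout combination with `p^j` would give a monic
element of `N_{(p^j)}(A)` of degree `< deg ν_j`. So the leading term of `g` is cancelled by a
multiple of `p ν_{j-1} ∈ N_{(p^j)}(A)` (or `deg g < deg ν_{j-1}`, and we pass to `j - 1`);
descending gives `p ∣ g`. Dividing by `p` and repeating yields the powers of `p`. -/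

open Polynomial

section NullIdeal

variable {D : Type*} [CommRing D] {n : ℕ}

def nullIdeal (A : Matrix (Fin n) (Fin n) D) (d : D) : Ideal D[X] where
  carrier := {f | memNullDvd A d f}
  add_mem' := by
    rintro f g ⟨B, hB⟩ ⟨B', hB'⟩
    exact ⟨B + B', by rw [map_add, hB, hB', smul_add]⟩
  zero_mem' := ⟨0, by simp⟩
  smul_mem' := by
    rintro g f ⟨B, hB⟩
    exact ⟨aeval A g * B, by rw [smul_eq_mul, map_mul, hB, mul_smul_comm]⟩

variable {A : Matrix (Fin n) (Fin n) D}

theorem mem_nullIdeal {d : D} {f : D[X]} : f ∈ nullIdeal A d ↔ memNullDvd A d f := Iff.rfl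

theorem C_mem_nullIdeal (d : D) : C d ∈ nullIdeal A d :=
  ⟨1, by rw [aeval_C, Algebra.algebraMap_eq_smul_one]⟩

theorem C_mul_mem_nullIdeal {d : D} {f : D[X]} (c : D) (hf : f ∈ nullIdeal A d) :
    C c * f ∈ nullIdeal A (c * d) := by
  obtain ⟨B, hB⟩ := hf
  exact ⟨B, by rw [map_mul, aeval_C, hB, ← Algebra.smul_def, mul_smul]⟩

theorem nullIdeal_le_of_dvd {d e : D} (h : d ∣ e) : nullIdeal A e ≤ nullIdeal A d := by
  obtain ⟨c, rfl⟩ := h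
  rintro f ⟨B, hB⟩
  exact ⟨c • B, by rw [hB, smul_smul]⟩

theorem mem_nullIdeal_of_C_mul_mem [IsDomain D] {c d : D} (hc : c ≠ 0) {f : D[X]}
    (h : C c * f ∈ nullIdeal A (c * d)) : f ∈ nullIdeal A d := by
  obtain ⟨B, hB⟩ := h
  rw [map_mul, aeval_C, ← Algebra.smul_def, mul_smul] at hB
  exact ⟨B, smul_right_injective _ hc hB⟩

theorem C_pow_sub_mul_mem_nullIdeal {p : D} {ℓ i : ℕ} {ν : D[X]}
    (hν : ν ∈ nullIdeal A (p ^ i)) (hi : i ≤ ℓ) : C (p ^ (ℓ - i)) * ν ∈ nullIdeal A (p ^ ℓ) := by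
  simpa only [← pow_add, Nat.sub_add_cancel hi] using C_mul_mem_nullIdeal (p ^ (ℓ - i)) hν

theorem IsMinPolyMod.mem_nullIdeal {d : D} {w : D[X]} (hw : IsMinPolyMod A d w) :
    w ∈ nullIdeal A d :=
  hw.2.1

theorem IsMinPolyMod.not_isCoprime_leadingCoeff_s6 {d : D} {w g : D[X]} (hw : IsMinPolyMod A d w)
    (hg : g ∈ nullIdeal A d) (hdeg : g.natDegree < w.natDegree) :
    ¬IsCoprime d g.leadingCoeff := by
  rintro ⟨a, b, hab⟩
  set q := C b * g + C (a * d) * X ^ g.natDegree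
  have hq_natDegree : q.natDegree ≤ g.natDegree :=
    natDegree_add_le_of_degree_le (natDegree_C_mul_le _ _)
      ((natDegree_C_mul_le _ _).trans (natDegree_X_pow_le _))
  have hq_monic : q.Monic := by
    refine monic_of_natDegree_le_of_coeff_eq_one _ hq_natDegree ?_
    simp only [q, coeff_add, coeff_C_mul, coeff_X_pow_self, mul_one]
    rw [← leadingCoeff]
    linear_combination hab
  have hq_mem : q ∈ nullIdeal A d := by
    refine add_mem (Ideal.mul_mem_left _ _ hg) ?_
    rw [C_mul, mul_comm (C a), mul_assoc]
    exact Ideal.mul_mem_right _ _ (C_mem_nullIdeal d)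
  have := natDegree_le_natDegree (hw.2.2 q hq_monic hq_mem)
  omega

end NullIdeal

theorem Polynomial.degree_sub_C_leadingCoeff_mul_X_pow_mul_lt {R : Type*} [Ring R]
    {g q : R[X]} (hq : q.Monic) (hdeg : q.natDegree ≤ g.natDegree) (hg : g ≠ 0) :
    (g - C g.leadingCoeff * X ^ (g.natDegree - q.natDegree) * q).degree < g.degree := by
  have hlc : g.leadingCoeff ≠ 0 := leadingCoeff_ne_zero.mpr hg
  have : Nontrivial R := nontrivial_of_ne _ _ hlc
  apply degree_sub_lt_left _ hg
  · rw [leadingCoeff_mul_monic hq, leadingCoeff_C_mul_X_pow]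
  · rw [hq.degree_mul, degree_C_mul_X_pow _ hlc, degree_eq_natDegree hq.ne_zero,
      degree_eq_natDegree hg]
    norm_cast
    omega

theorem le_of_mem_indexSet {D : Type*} [CommRing D] {ν : ℕ → D[X]} {ℓ i : ℕ}
    (hi : i ∈ indexSet ν ℓ) : i ≤ ℓ := by
  rcases Finset.mem_insert.mp hi with rfl | hi
  · exact le_rfl
  · exact (Finset.mem_range.mp (Finset.mem_filter.mp hi).1).le

section PrimePower

variable {D : Type*} [CommRing D] [IsDomain D] [IsPrincipalIdealRing D] {n : ℕ}
  {A : Matrix (Fin n) (Fin n) D} {p : D} {ℓ : ℕ} {ν : ℕ → D[X]}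

theorem C_dvd_of_mem_nullIdeal_of_natDegree_lt (hp : Prime p) (hν0 : ν 0 = 1)
    (hν : ∀ i ≤ ℓ, IsMinPolyMod A (p ^ i) (ν i)) :
    ∀ j ≤ ℓ, ∀ g ∈ nullIdeal A (p ^ j), g.natDegree < (ν j).natDegree → C p ∣ g := by
  intro j
  induction j with
  | zero => simp [hν0]
  | succ j ih =>
    intro hj g
    induction g using degree_lt_wf.induction with
    | _ g ih_deg =>
      intro hg hdeg
      by_cases hν_le : (ν j).natDegree ≤ g.natDegree
      swap
      · exact ih (by omega) g (nullIdeal_le_of_dvd (pow_dvd_pow p j.le_succ) hg) (by omega)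
      rcases eq_or_ne g 0 with rfl | hg0
      · exact dvd_zero _
      obtain ⟨b, hb⟩ : p ∣ g.leadingCoeff := by
        by_contra hndvd
        exact (hν (j + 1) hj).not_isCoprime_leadingCoeff_s6 hg hdeg
          (hp.coprime_iff_not_dvd.mpr hndvd).pow_left
      set r := C g.leadingCoeff * X ^ (g.natDegree - (ν j).natDegree) * ν j
      have hr_eq : r = C p * ν j * (C b * X ^ (g.natDegree - (ν j).natDegree)) := by
        simp only [r, hb, C_mul]
        ring
      have hr_mem : r ∈ nullIdeal A (p ^ (j + 1)) := by
        rw [hr_eq, pow_succ']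
        exact Ideal.mul_mem_right _ _ (C_mul_mem_nullIdeal p (hν j (by omega)).mem_nullIdeal)
      have hlt := degree_sub_C_leadingCoeff_mul_X_pow_mul_lt (hν j (by omega)).1 hν_le hg0
      have hsub : C p ∣ g - r :=
        ih_deg _ hlt (sub_mem hg hr_mem) ((natDegree_le_natDegree hlt.le).trans_lt hdeg)
      exact (dvd_sub_left (hr_eq ▸ dvd_mul_of_dvd_left (dvd_mul_right _ _) _)).mp hsub

theorem C_pow_dvd_of_mem_nullIdeal_of_natDegree_lt (hp : Prime p) (hν0 : ν 0 = 1)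
    (hν : ∀ i ≤ ℓ, IsMinPolyMod A (p ^ i) (ν i)) {j : ℕ} (hj : j ≤ ℓ) :
    ∀ L, ∀ g ∈ nullIdeal A (p ^ (j + L)), g.natDegree < (ν j).natDegree →
      C (p ^ (L + 1)) ∣ g := by
  intro L
  induction L with
  | zero => simpa using C_dvd_of_mem_nullIdeal_of_natDegree_lt hp hν0 hν j hj
  | succ L ih =>
    intro g hg hdeg
    obtain ⟨g', rfl⟩ := C_dvd_of_mem_nullIdeal_of_natDegree_lt hp hν0 hν j hj g
      (nullIdeal_le_of_dvd (pow_dvd_pow p (by omega)) hg) hdeg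
    rw [← add_assoc, pow_succ'] at hg
    rw [natDegree_C_mul hp.ne_zero] at hdeg
    rw [pow_succ', C_mul]
    exact mul_dvd_mul_left _ (ih g' (mem_nullIdeal_of_C_mul_mem hp.ne_zero hg) hdeg)

theorem exists_mem_indexSet_natDegree_le_and_C_pow_dvd (hp : Prime p) (hν0 : ν 0 = 1)
    (hν : ∀ i ≤ ℓ, IsMinPolyMod A (p ^ i) (ν i)) {f : D[X]} (hf : f ∈ nullIdeal A (p ^ ℓ)) :
    ∃ i ∈ indexSet ν ℓ, (ν i).natDegree ≤ f.natDegree ∧ C (p ^ (ℓ - i)) ∣ f := by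
  classical
  let P : ℕ → Prop := fun j => (ν j).natDegree ≤ f.natDegree
  obtain ⟨i, hi⟩ : ∃ i, Nat.findGreatest P ℓ = i := ⟨_, rfl⟩
  have hνi : P i := hi ▸ Nat.findGreatest_spec (Nat.zero_le ℓ) (by simp [P, hν0])
  rcases (hi ▸ Nat.findGreatest_le ℓ : i ≤ ℓ).eq_or_lt with hiℓ | hiℓ
  · exact ⟨i, hiℓ ▸ Finset.mem_insert_self _ _, hνi, by simp [hiℓ]⟩
  have hlt : ¬P (i + 1) := Nat.findGreatest_is_greatest (hi ▸ Nat.lt_succ_self i) hiℓ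
  refine ⟨i, Finset.mem_insert_of_mem (Finset.mem_filter.mpr
    ⟨Finset.mem_range.mpr hiℓ, by simp only [P] at hνi hlt; omega⟩), hνi, ?_⟩
  have := C_pow_dvd_of_mem_nullIdeal_of_natDegree_lt hp hν0 hν hiℓ (ℓ - (i + 1)) f
    (by rwa [Nat.add_sub_cancel' hiℓ]) (not_le.mp hlt)
  rwa [show ℓ - (i + 1) + 1 = ℓ - i by omega] at this

theorem nullIdeal_pow_le_span (hp : Prime p) (hν0 : ν 0 = 1)
    (hν : ∀ i ≤ ℓ, IsMinPolyMod A (p ^ i) (ν i)) :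
    nullIdeal A (p ^ ℓ) ≤ Ideal.span ((fun i => C (p ^ (ℓ - i)) * ν i) '' indexSet ν ℓ) := by
  intro f
  induction f using degree_lt_wf.induction with
  | _ f ih =>
    intro hf
    rcases eq_or_ne f 0 with rfl | hf0
    · exact zero_mem _
    obtain ⟨i, hiI, hνi, hdvd⟩ := exists_mem_indexSet_natDegree_le_and_C_pow_dvd hp hν0 hν hf
    have hiℓ := le_of_mem_indexSet hiI
    obtain ⟨b, hb⟩ := (C_dvd_iff_dvd_coeff _ _).mp hdvd f.natDegree
    set r := C f.leadingCoeff * X ^ (f.natDegree - (ν i).natDegree) * ν i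
    have hr_eq : r = C (p ^ (ℓ - i)) * ν i * (C b * X ^ (f.natDegree - (ν i).natDegree)) := by
      simp only [r, leadingCoeff, hb, C_mul]
      ring
    have hr_mem : r ∈ nullIdeal A (p ^ ℓ) := hr_eq ▸
      Ideal.mul_mem_right _ _ (C_pow_sub_mul_mem_nullIdeal (hν i hiℓ).mem_nullIdeal hiℓ)
    have hr_span : r ∈ Ideal.span ((fun i => C (p ^ (ℓ - i)) * ν i) '' indexSet ν ℓ) :=
      hr_eq ▸ Ideal.mul_mem_right _ _ (Ideal.subset_span ⟨i, hiI, rfl⟩)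
    have hlt := degree_sub_C_leadingCoeff_mul_X_pow_mul_lt (hν i hiℓ).1 hνi hf0
    exact (Submodule.sub_mem_iff_left _ hr_span).mp (ih _ hlt (sub_mem hf hr_mem))

theorem nullIdeal_pow_eq_span (hp : Prime p) (hν0 : ν 0 = 1)
    (hν : ∀ i ≤ ℓ, IsMinPolyMod A (p ^ i) (ν i)) :
    nullIdeal A (p ^ ℓ) = Ideal.span ((fun i => C (p ^ (ℓ - i)) * ν i) '' indexSet ν ℓ) := by
  refine le_antisymm (nullIdeal_pow_le_span hp hν0 hν) (Ideal.span_le.mpr ?_)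
  rintro _ ⟨i, hi, rfl⟩
  exact C_pow_sub_mul_mem_nullIdeal (hν i (le_of_mem_indexSet hi)).mem_nullIdeal
    (le_of_mem_indexSet hi)

end PrimePower

/-- Let `p` be prime, `ℓ ≥ 0`, and `ν_i` `(p^i)`-minimal polynomials of `A`
for `0 ≤ i ≤ ℓ` (with `ν_0 = 1`). Then `N_{(p^ℓ)}(A) = Σ_{i ∈ I_A^ℓ} p^{ℓ-i}·ν_i·D[X]`,
where `I_A^ℓ` is the `ℓ`-th index set of `A` with respect to `p` (stated elementwise). -/
theorem stmt6 {D : Type*} [CommRing D] [IsDomain D] [IsPrincipalIdealRing D]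
    (p : D) (hp : Prime p) (ℓ : ℕ)
    {n : ℕ} (A : Matrix (Fin n) (Fin n) D)
    (ν : ℕ → Polynomial D) (hν0 : ν 0 = 1)
    (hν : ∀ i, i ≤ ℓ → IsMinPolyMod A (p ^ i) (ν i)) :
    ∀ f : Polynomial D, memNullDvd A (p ^ ℓ) f ↔
      ∃ c : ℕ → Polynomial D,
        f = ∑ i ∈ indexSet ν ℓ, Polynomial.C (p ^ (ℓ - i)) * ν i * c i := by
  intro f
  rw [← mem_nullIdeal, nullIdeal_pow_eq_span hp hν0 hν, Ideal.span,
    Submodule.mem_span_image_finset_iff_exists_fun']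
  simp only [smul_eq_mul, mul_comm (_ : D[X]) (C _ * _), eq_comm]
end
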